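/- arXiv:2103.11037 — 2 statements merged into one kernel-verified Lean document; each statement's English description precedes it below -/
import Mathlib

section
/- Let 𝒜 ∈ ℝ^{d₁×⋯×dₙ} be a tensor with multilinear rank (r₁,…,rₙ). Let I_i ⊆ [d_i] and J_i ⊆ [∏_{j≠i} d_j], and set C_i = 𝒜_(i)(:,J_i) and U_i = C_i(I_i,:). If rank(U_i) = r_i for all i = 1,…,n, then 𝒜 = 𝒜 ×₁ (C₁C₁†) ×₂ ⋯ ×ₙ (CₙCₙ†). -/
open scoped BigOperators
open Matrix

noncomputable section

namespace TCUR

/-- Euclidean norm of a finite real vector. -/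
def enorm {ι : Type*} [Fintype ι] (x : ι → ℝ) : ℝ :=
  Real.sqrt (∑ i, x i ^ 2)

/-- Frobenius norm of a real matrix. -/
def frob {m n : Type*} [Fintype m] [Fintype n] (A : Matrix m n ℝ) : ℝ :=
  Real.sqrt (∑ i, ∑ j, A i j ^ 2)

/-- Spectral norm of a real matrix. -/
def spec {m n : Type*} [Fintype m] [Fintype n] (A : Matrix m n ℝ) : ℝ :=
  sSup ((fun x => enorm (A.mulVec x)) '' {x : n → ℝ | enorm x ≤ 1})

/-- The four Penrose conditions: `B` is the Moore–Penrose pseudoinverse of `A`. -/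
def IsMP {m n : Type*} [Fintype m] [Fintype n] (A : Matrix m n ℝ) (B : Matrix n m ℝ) : Prop :=
  A * B * A = A ∧ B * A * B = B ∧ (A * B)ᵀ = A * B ∧ (B * A)ᵀ = B * A

open Classical in
/-- Moore–Penrose pseudoinverse of a real matrix (def body). -/
def pinv {m n : Type*} [Fintype m] [Fintype n] (A : Matrix m n ℝ) : Matrix n m ℝ :=
  if h : ∃ B, IsMP A B then h.choose else 0

/-- `sval k A` is the `k`-th largest singular value of `A`
(via the Eckart–Young characterization). -/
def sval {m n : Type*} [Fintype m] [Fintype n] (k : ℕ) (A : Matrix m n ℝ) : ℝ :=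
  sInf ((fun B => spec (A - B)) '' {B : Matrix m n ℝ | B.rank < k})

/-- `IsBestRank r A Ar`: `Ar` is a best rank-`r` (Frobenius) approximation of `A`,
 e.g. a rank-`r` truncated SVD of `A`. -/
def IsBestRank {m n : Type*} [Fintype m] [Fintype n] (r : ℕ) (A Ar : Matrix m n ℝ) : Prop :=
  Ar.rank ≤ r ∧ ∀ B : Matrix m n ℝ, B.rank ≤ r → frob (A - Ar) ≤ frob (A - B)

/-- Compact SVD data: `A = W * S * Vᵀ` with `W, V` having orthonormal columns and
`S` diagonal with positive diagonal entries. -/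
def CompactSVD {m n : Type*} [Fintype m] [Fintype n] {r : ℕ} (A : Matrix m n ℝ)
    (W : Matrix m (Fin r) ℝ) (S : Matrix (Fin r) (Fin r) ℝ) (V : Matrix n (Fin r) ℝ) : Prop :=
  A = W * S * Vᵀ ∧ Wᵀ * W = 1 ∧ Vᵀ * V = 1 ∧ (∀ i j, i ≠ j → S i j = 0) ∧ ∀ i, 0 < S i i

/-- Coherence `μ(W) = (d/r) max_i ‖W(i,:)‖₂²` of a matrix with orthonormal columns. -/
def coh {m r : Type*} [Fintype m] [Fintype r] (W : Matrix m r ℝ) : ℝ :=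
  ((Fintype.card m : ℝ) / (Fintype.card r : ℝ)) * ⨆ i : m, ∑ j, W i j ^ 2

/-- Row submatrix with rows restricted to `I`. -/
def rowsub {m k : Type*} (M : Matrix m k ℝ) (I : Finset m) : Matrix {x // x ∈ I} k ℝ :=
  M.submatrix Subtype.val id

/-- Probability, with respect to the uniform distribution on the finite sample space
`{ω : Ω | cond ω}`, of the event `{ω | event ω}`. -/
def uniformProb {Ω : Type*} [Fintype Ω] (cond event : Ω → Prop) : ℝ :=
  (Nat.card {ω : Ω // cond ω ∧ event ω} : ℝ) / (Nat.card {ω : Ω // cond ω} : ℝ)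

variable {n : ℕ}

/-- Mode-`k` unfolding of an `n`-mode tensor: the matrix whose columns are the
mode-`k` fibers of the tensor. -/
def unfold {ι : Fin n → Type*} (A : ((i : Fin n) → ι i) → ℝ) (k : Fin n) :
    Matrix (ι k) ((j : {j : Fin n // j ≠ k}) → ι j.1) ℝ :=
  fun x y => A fun i => if h : i = k then cast (congrArg ι h.symm) x else y ⟨i, h⟩

/-- Tucker (all-modes) product `T ×₁ M 1 ×₂ ⋯ ×ₙ M n`. -/
def tucker {ι κ : Fin n → Type*} [∀ i, Fintype (κ i)]
    (T : ((i : Fin n) → κ i) → ℝ) (M : (i : Fin n) → Matrix (ι i) (κ i) ℝ) :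
    ((i : Fin n) → ι i) → ℝ :=
  fun x => ∑ y : (i : Fin n) → κ i, (∏ i, M i (x i) (y i)) * T y

/-- The subtensor with mode-`i` indices restricted to `I i`. -/
def subT {ι : Fin n → Type*} (A : ((i : Fin n) → ι i) → ℝ)
    (I : (i : Fin n) → Finset (ι i)) : ((i : Fin n) → {x // x ∈ I i}) → ℝ :=
  fun x => A fun i => (x i).1

/-- Frobenius norm of a tensor. -/
def tfrob {ι : Fin n → Type*} [∀ i, Fintype (ι i)] (A : ((i : Fin n) → ι i) → ℝ) : ℝ :=
  Real.sqrt (∑ x : (i : Fin n) → ι i, A x ^ 2)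

/-- `Cmat A J i = 𝒜_(i)(:,J_i)`: the mode-`i` unfolding restricted to the columns `J i`. -/
def Cmat {ι : Fin n → Type*} (A : ((i : Fin n) → ι i) → ℝ)
    (J : (i : Fin n) → Finset ((j : {j : Fin n // j ≠ i}) → ι j.1)) (i : Fin n) :
    Matrix (ι i) {y // y ∈ J i} ℝ :=
  (unfold A i).submatrix id Subtype.val

/-- `Umat A I J i = 𝒜_(i)(I_i,J_i)`. -/
def Umat {ι : Fin n → Type*} (A : ((i : Fin n) → ι i) → ℝ)
    (I : (i : Fin n) → Finset (ι i))
    (J : (i : Fin n) → Finset ((j : {j : Fin n // j ≠ i}) → ι j.1)) (i : Fin n) :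
    Matrix {x // x ∈ I i} {y // y ∈ J i} ℝ :=
  (unfold A i).submatrix Subtype.val Subtype.val

/-- The Chidori column index set `⊗_{j ≠ i} I j`. -/
def chidoriJ {ι : Fin n → Type*} (I : (i : Fin n) → Finset (ι i)) (i : Fin n) :
    Finset ((j : {j : Fin n // j ≠ i}) → ι j.1) :=
  Fintype.piFinset fun j => I j.1

/-- `σ_max(𝒜) = max_j σ₁(𝒜_(j))`. -/
def tsmax {ι : Fin n → Type*} [∀ i, Fintype (ι i)] (A : ((i : Fin n) → ι i) → ℝ) : ℝ :=
  ⨆ j, sval 1 (unfold A j)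

/-- `σ_min(𝒜) = min_j σ_{r_j}(𝒜_(j))`. -/
def tsmin {ι : Fin n → Type*} [∀ i, Fintype (ι i)] (A : ((i : Fin n) → ι i) → ℝ)
    (r : Fin n → ℕ) : ℝ :=
  ⨅ j, sval (r j) (unfold A j)

/-
Since `Uᵢ` is a submatrix of `Cᵢ`, which is a column submatrix of `𝒜_(i)`, the hypothesis
`rank Uᵢ = rᵢ = rank 𝒜_(i)` forces `Cᵢ` to have the same column space as `𝒜_(i)`.
The Penrose identity `CᵢCᵢ†Cᵢ = Cᵢ` makes `CᵢCᵢ†` the identity on that column space, so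
`CᵢCᵢ†` fixes every mode-`i` fiber of `𝒜`. A Tucker product whose `i`-th factor fixes the
mode-`i` fibers for every `i` is the identity: absorb the factors one mode at a time.
-/

section Pseudoinverse

variable {l m o : Type*} [Fintype o]

lemma exists_mul_eq_of_rank {K : Type*} [Field K] (A : Matrix m o K) :
    ∃ (F : Matrix m (Fin A.rank) K) (G : Matrix (Fin A.rank) o K), A = F * G := by
  classical
  let V := LinearMap.range A.mulVecLin
  let e : V ≃ₗ[K] (Fin A.rank → K) := LinearEquiv.ofFinrankEq _ _ (Module.finrank_fin_fun K).symm
  refine ⟨LinearMap.toMatrix' (V.subtype ∘ₗ e.symm.toLinearMap),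
    LinearMap.toMatrix' (e.toLinearMap ∘ₗ A.mulVecLin.rangeRestrict), ?_⟩
  rw [← LinearMap.toMatrix'_comp]
  have hcomp : (V.subtype ∘ₗ e.symm.toLinearMap) ∘ₗ e.toLinearMap ∘ₗ A.mulVecLin.rangeRestrict
      = A.mulVecLin := by
    refine LinearMap.ext fun v => ?_
    simp
  rw [hcomp]
  exact (LinearMap.toMatrix'_toLin' A).symm

variable [Fintype l] [Fintype m]

lemma isUnit_of_rank_eq_card {K : Type*} [Field K] [DecidableEq m] {A : Matrix m m K}
    (h : A.rank = Fintype.card m) : IsUnit A := by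
  rw [← Matrix.mulVec_surjective_iff_isUnit, ← Matrix.coe_mulVecLin, ← LinearMap.range_eq_top]
  exact Submodule.eq_top_of_finrank_eq (by rwa [Module.finrank_fintype_fun_eq_card])

lemma isMP_mul {r : Type*} [Fintype r] [DecidableEq r] (F : Matrix m r ℝ) (G : Matrix r o ℝ)
    (hF : IsUnit (Fᵀ * F)) (hG : IsUnit (G * Gᵀ)) :
    IsMP (F * G) (Gᵀ * (G * Gᵀ)⁻¹ * (Fᵀ * F)⁻¹ * Fᵀ) := by
  have hF' : ∀ X : Matrix r o ℝ, (Fᵀ * F)⁻¹ * (Fᵀ * (F * X)) = X := fun X => by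
    rw [← Matrix.mul_assoc Fᵀ, Matrix.nonsing_inv_mul_cancel_left _ _
      ((Matrix.isUnit_iff_isUnit_det _).mp hF)]
  have hG' : ∀ X : Matrix r m ℝ, G * (Gᵀ * ((G * Gᵀ)⁻¹ * X)) = X := fun X => by
    rw [← Matrix.mul_assoc G, Matrix.mul_nonsing_inv_cancel_left _ _
      ((Matrix.isUnit_iff_isUnit_det _).mp hG)]
  refine ⟨?_, ?_, ?_, ?_⟩ <;>
    simp [Matrix.mul_assoc, hF', hG', Matrix.transpose_nonsing_inv]

lemma exists_isMP (A : Matrix m o ℝ) : ∃ B, IsMP A B := by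
  obtain ⟨F, G, hA⟩ := exists_mul_eq_of_rank A
  have hF : F.rank = A.rank := le_antisymm
    ((F.rank_le_card_width).trans_eq (Fintype.card_fin _))
    ((congrArg Matrix.rank hA).trans_le (Matrix.rank_mul_le_left F G))
  have hG : G.rank = A.rank := le_antisymm
    ((G.rank_le_card_height).trans_eq (Fintype.card_fin _))
    ((congrArg Matrix.rank hA).trans_le (Matrix.rank_mul_le_right F G))
  rw [hA]
  exact ⟨_, isMP_mul F G
    (isUnit_of_rank_eq_card (by rw [Matrix.rank_transpose_mul_self, hF, Fintype.card_fin]))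
    (isUnit_of_rank_eq_card (by rw [Matrix.rank_self_mul_transpose, hG, Fintype.card_fin]))⟩

lemma isMP_pinv (A : Matrix m o ℝ) : IsMP A (pinv A) := by
  rw [pinv, dif_pos (exists_isMP A)]
  exact (exists_isMP A).choose_spec

lemma mul_pinv_mul_eq_of_range_le (C : Matrix m l ℝ) (M : Matrix m o ℝ)
    (h : LinearMap.range M.mulVecLin ≤ LinearMap.range C.mulVecLin) :
    C * pinv C * M = M := by
  refine Matrix.ext_iff_mulVec.mpr fun v => ?_
  obtain ⟨u, hu⟩ := h ⟨v, rfl⟩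
  simp only [Matrix.mulVecLin_apply] at hu
  rw [← Matrix.mulVec_mulVec, ← hu, Matrix.mulVec_mulVec, (isMP_pinv C).1]

end Pseudoinverse

section ColumnSpace

variable {K : Type*} [Field K] {k l m o : Type*} [Fintype l] [Fintype o]

lemma range_mulVecLin_submatrix_le (M : Matrix m o K) (g : l → o) :
    LinearMap.range (M.submatrix id g).mulVecLin ≤ LinearMap.range M.mulVecLin := by
  rw [Matrix.range_mulVecLin, Matrix.range_mulVecLin]
  refine Submodule.span_mono ?_
  rintro _ ⟨j, rfl⟩
  exact ⟨g j, rfl⟩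

lemma range_mulVecLin_submatrix_eq_of_rank_eq [Fintype k] (M : Matrix m o K) (f : k → m)
    (g : l → o) (h : (M.submatrix f g).rank = M.rank) :
    LinearMap.range (M.submatrix id g).mulVecLin = LinearMap.range M.mulVecLin :=
  Submodule.eq_of_le_of_finrank_eq (range_mulVecLin_submatrix_le M g) <| le_antisymm
    (M.rank_submatrix_le id g) (h.symm.trans_le ((M.submatrix id g).rank_submatrix_le f id))

end ColumnSpace

lemma sum_sum_update {ι : Type*} [Fintype ι] [DecidableEq ι] {β : ι → Type*}
    [∀ i, Fintype (β i)] {R : Type*} [AddCommMonoid R] (a : ι)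
    (f : ((i : ι) → β i) → β a → R) :
    ∑ y, ∑ t, f (Function.update y a t) (y a) = ∑ y, ∑ t, f y t := by
  simp only [← Fintype.sum_prod_type']
  have hinv : Function.Involutive fun p : ((i : ι) → β i) × β a =>
      (Function.update p.1 a p.2, p.1 a) := fun p => by simp
  exact Fintype.sum_equiv hinv.toPerm _ _ fun p => rfl

section Tucker

variable {κ : Fin n → Type*}

lemma unfold_apply_update (T : ((i : Fin n) → κ i) → ℝ) (a : Fin n) (x : (i : Fin n) → κ i)
    (t : κ a) : unfold T a t (fun j => x j.1) = T (Function.update x a t) := by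
  refine congrArg T (funext fun i => ?_)
  by_cases h : i = a
  · subst h; simp
  · simp [h]

variable [∀ i, Fintype (κ i)]

/-- The mode-`a` product `T ×ₐ M`. -/
def modeMul (T : ((i : Fin n) → κ i) → ℝ) (a : Fin n) (M : Matrix (κ a) (κ a) ℝ) :
    ((i : Fin n) → κ i) → ℝ :=
  fun x => ∑ t, M (x a) t * T (Function.update x a t)

lemma modeMul_eq_self_of_mul_unfold {T : ((i : Fin n) → κ i) → ℝ} {a : Fin n}
    {M : Matrix (κ a) (κ a) ℝ} (h : M * unfold T a = unfold T a) : modeMul T a M = T := by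
  funext x
  have := congrFun (congrFun h (x a)) fun j => x j.1
  simp only [Matrix.mul_apply, unfold_apply_update, Function.update_eq_self] at this
  exact this

lemma tucker_update_mul {ι : Fin n → Type*} (T : ((i : Fin n) → κ i) → ℝ)
    (Q : (i : Fin n) → Matrix (ι i) (κ i) ℝ) (a : Fin n) (M : Matrix (κ a) (κ a) ℝ) :
    tucker T (Function.update Q a (Q a * M)) = tucker (modeMul T a M) Q := by
  funext x
  let R : ((i : Fin n) → κ i) → ℝ := fun y => ∏ i ∈ Finset.univ.erase a, Q i (x i) (y i)
  have hprod : ∀ (N : Matrix (ι a) (κ a) ℝ) y,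
      ∏ i, Function.update Q a N i (x i) (y i) = N (x a) (y a) * R y := fun N y => by
    rw [← Finset.mul_prod_erase _ _ (Finset.mem_univ a), Function.update_self]
    exact congrArg _ (Finset.prod_congr rfl fun i hi => by
      rw [Function.update_of_ne (Finset.ne_of_mem_erase hi)])
  have hprod' : ∀ y, ∏ i, Q i (x i) (y i) = Q a (x a) (y a) * R y := by
    simpa using hprod (Q a)
  have hR : ∀ y t, R (Function.update y a t) = R y := fun y t =>
    Finset.prod_congr rfl fun i hi => by rw [Function.update_of_ne (Finset.ne_of_mem_erase hi)]
  let f : ((i : Fin n) → κ i) → κ a → ℝ := fun y s => Q a (x a) s * M s (y a) * R y * T y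
  calc tucker T (Function.update Q a (Q a * M)) x = ∑ y, ∑ s, f y s :=
        Fintype.sum_congr _ _ fun y => by
          rw [hprod, Matrix.mul_apply, Finset.sum_mul, Finset.sum_mul]
    _ = ∑ y, ∑ t, f (Function.update y a t) (y a) := (sum_sum_update a f).symm
    _ = tucker (modeMul T a M) Q x := Fintype.sum_congr _ _ fun y => by
          simp only [f, modeMul, hprod', hR, Function.update_self, Finset.mul_sum]
          exact Finset.sum_congr rfl fun t _ => by ring

lemma tucker_one [∀ i, DecidableEq (κ i)] (T : ((i : Fin n) → κ i) → ℝ) :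
    tucker T (fun i => (1 : Matrix (κ i) (κ i) ℝ)) = T := by
  funext x
  simp [tucker, Matrix.one_apply, Finset.prod_boole, ← funext_iff]

lemma tucker_eq_self_of_mul_unfold [∀ i, DecidableEq (κ i)] (T : ((i : Fin n) → κ i) → ℝ)
    (P : (i : Fin n) → Matrix (κ i) (κ i) ℝ) (h : ∀ i, P i * unfold T i = unfold T i) :
    tucker T P = T := by
  suffices ∀ S : Finset (Fin n), tucker T (fun i => if i ∈ S then P i else 1) = T by
    simpa using this Finset.univ
  intro S
  induction S using Finset.induction_on with
  | empty => simpa using tucker_one T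
  | insert a S ha ih =>
    have hstep : (fun i => if i ∈ insert a S then P i else 1) = Function.update
        (fun i => if i ∈ S then P i else 1) a ((if a ∈ S then P a else 1) * P a) := by
      funext i
      by_cases hi : i = a
      · subst hi; simp [ha]
      · simp [hi, Function.update_of_ne]
    rw [hstep, tucker_update_mul, modeMul_eq_self_of_mul_unfold (h a), ih]

end Tucker

/-- If `rank Uᵢ = rᵢ` for all `i`, then `A = A ×₁ (C₁C₁†) ×₂ ⋯ ×ₙ (CₙCₙ†)`. -/
theorem fiber_cur_projection {n : ℕ} {d : Fin n → ℕ}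
    (A : ((i : Fin n) → Fin (d i)) → ℝ) (r : Fin n → ℕ)
    (hrank : ∀ i, (unfold A i).rank = r i)
    (I : (i : Fin n) → Finset (Fin (d i)))
    (J : (i : Fin n) → Finset ((j : {j : Fin n // j ≠ i}) → Fin (d j.1)))
    (hU : ∀ i, (Umat A I J i).rank = r i) :
    A = tucker A fun i => Cmat A J i * pinv (Cmat A J i) := by
  refine (tucker_eq_self_of_mul_unfold A _ fun i => ?_).symm
  have hcols := range_mulVecLin_submatrix_eq_of_rank_eq (unfold A i) Subtype.val Subtype.val
    ((hU i).trans (hrank i).symm)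
  exact mul_pinv_mul_eq_of_range_le (Cmat A J i) (unfold A i) hcols.ge

end TCUR
end
end

section
/- Let 𝒜 ∈ ℝ^{d₁×⋯×dₙ} have multilinear rank (r₁,…,rₙ), with HOSVD 𝒜 = 𝒯 ×₁ W₁ ×₂ ⋯ ×ₙ Wₙ, where W_i is the matrix of left singular vectors of 𝒜_(i). Let I_i ⊆ [d_i] and ℛ = 𝒜(I₁,…,Iₙ). Then for each i, ‖ℛ_(i)‖₂ ≤ σ_max(𝒜) · ∏_{j=1}ⁿ ‖W_j(I_j,:)‖₂, where σ_max(𝒜) = max_j σ₁(𝒜_(j)). -/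
open scoped BigOperators
open Matrix

noncomputable section

namespace TCUR

variable {n : ℕ}

/-!
Restricting the indices of `𝒜 = 𝒯 ×₁ W₁ ⋯ ×ₙ Wₙ` restricts the rows of the factors, so
`ℛ = 𝒯 ×₁ W₁(I₁,:) ⋯ ×ₙ Wₙ(Iₙ,:)`. The mode-`i` unfolding of a Tucker product `𝒯 ×₁ M₁ ⋯ ×ₙ Mₙ`
is `Mᵢ 𝒯_(i) (⊗_{j ≠ i} Mⱼ)ᵀ`, and the spectral norm is submultiplicative for ordinary and for
Kronecker products, so `‖ℛ_(i)‖₂ ≤ ‖𝒯_(i)‖₂ ∏ⱼ ‖Wⱼ(Iⱼ,:)‖₂`. The same bound applied to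
`𝒯 = 𝒜 ×₁ W₁ᵀ ⋯ ×ₙ Wₙᵀ`, with `‖Wⱼᵀ‖₂ ≤ 1`, gives `‖𝒯_(i)‖₂ ≤ ‖𝒜_(i)‖₂ = σ₁(𝒜_(i)) ≤ σ_max(𝒜)`.
-/

open scoped Matrix.Norms.L2Operator Kronecker

def piKronecker {R J : Type*} [CommSemiring R] [Fintype J] {κ μ : J → Type*}
    (M : ∀ j, Matrix (κ j) (μ j) R) : Matrix (∀ j, κ j) (∀ j, μ j) R :=
  Matrix.of fun a b => ∏ j, M j (a j) (b j)

lemma piKronecker_option {R J : Type*} [CommSemiring R] [Fintype J] {κ μ : Option J → Type*}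
    (M : ∀ j, Matrix (κ j) (μ j) R) :
    piKronecker M = (M none ⊗ₖ piKronecker fun j => M (some j)).submatrix
      Equiv.piOptionEquivProd Equiv.piOptionEquivProd := by
  ext a b
  simp [piKronecker, Fintype.prod_option]

lemma piKronecker_equiv {R J J' : Type*} [CommSemiring R] [Fintype J] [Fintype J']
    {κ μ : J' → Type*} (e : J ≃ J') (M : ∀ j, Matrix (κ j) (μ j) R) :
    piKronecker M = (piKronecker fun j => M (e j)).submatrix
      (Equiv.piCongrLeft κ e).symm (Equiv.piCongrLeft μ e).symm := by
  ext a b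
  simp only [piKronecker, of_apply, submatrix_apply]
  exact (Fintype.prod_equiv e _ _ fun j => by simp).symm

section L2OpNorm

variable {𝕜 : Type*} [RCLike 𝕜] {l m n p q : Type*} [Fintype l] [Fintype m] [Fintype n]
  [Fintype p] [Fintype q]

lemma l2_opNorm_one_le [DecidableEq n] : ‖(1 : Matrix n n 𝕜)‖ ≤ 1 := by
  rw [← diagonal_one, l2_opNorm_diagonal]
  exact (pi_norm_le_iff_of_nonneg zero_le_one).mpr fun _ => by simp

lemma l2_opNorm_le_one_of_conjTranspose_mul_self [DecidableEq n] {A : Matrix m n 𝕜}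
    (hA : Aᴴ * A = 1) : ‖A‖ ≤ 1 := by
  have h := l2_opNorm_conjTranspose_mul_self A
  rw [hA] at h
  nlinarith [norm_nonneg A, l2_opNorm_one_le (𝕜 := 𝕜) (n := n)]

lemma l2_opNorm_one_submatrix_id_le [DecidableEq n] [DecidableEq p] {f : p → n}
    (hf : Function.Injective f) : ‖(1 : Matrix n n 𝕜).submatrix id f‖ ≤ 1 :=
  l2_opNorm_le_one_of_conjTranspose_mul_self <| by
    rw [conjTranspose_submatrix, conjTranspose_one, ← submatrix_mul _ _ _ _ _ Function.bijective_id,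
      Matrix.one_mul, submatrix_one _ hf]

lemma l2_opNorm_submatrix_le [DecidableEq m] [DecidableEq n] [DecidableEq p] [DecidableEq q]
    (A : Matrix m n 𝕜) {f : p → m} {g : q → n} (hf : Function.Injective f)
    (hg : Function.Injective g) : ‖A.submatrix f g‖ ≤ ‖A‖ := by
  have hA : A.submatrix f g =
      ((1 : Matrix m m 𝕜).submatrix id f)ᴴ * A * (1 : Matrix n n 𝕜).submatrix id g := by
    ext i j
    simp [conjTranspose_submatrix, mul_apply, one_apply]
  rw [hA]
  calc _ ≤ ‖((1 : Matrix m m 𝕜).submatrix id f)ᴴ‖ * ‖A‖ * ‖(1 : Matrix n n 𝕜).submatrix id g‖ :=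
        (l2_opNorm_mul _ _).trans (mul_le_mul_of_nonneg_right (l2_opNorm_mul _ _) (norm_nonneg _))
    _ ≤ 1 * ‖A‖ * 1 := by
        rw [l2_opNorm_conjTranspose]
        gcongr
        exacts [l2_opNorm_one_submatrix_id_le hf, l2_opNorm_one_submatrix_id_le hg]
    _ = ‖A‖ := by ring

lemma l2_opNorm_one_kronecker_le [DecidableEq l] [DecidableEq n] (B : Matrix m n 𝕜) :
    ‖(1 : Matrix l l 𝕜) ⊗ₖ B‖ ≤ ‖B‖ := by
  rw [l2_opNorm_def ((1 : Matrix l l 𝕜) ⊗ₖ B)]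
  refine ContinuousLinearMap.opNorm_le_bound _ (norm_nonneg _) fun x => ?_
  refine (sq_le_sq₀ (norm_nonneg _) (by positivity)).mp ?_
  let xa : l → EuclideanSpace 𝕜 n := fun a => WithLp.toLp 2 fun c => x (a, c)
  have hrow : ∀ a b, ((1 : Matrix l l 𝕜) ⊗ₖ B *ᵥ x.ofLp) (a, b) = (B *ᵥ (xa a).ofLp) b := by
    intro a b
    simp [mulVec, dotProduct, Fintype.sum_prod_type, one_apply, xa]
  have hx : ‖x‖ ^ 2 = ∑ a, ‖xa a‖ ^ 2 := by
    simp [EuclideanSpace.norm_sq_eq, Fintype.sum_prod_type, xa]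
  calc _ = ∑ a, ‖WithLp.toLp 2 (B *ᵥ (xa a).ofLp)‖ ^ 2 := by
        simp [EuclideanSpace.norm_sq_eq, Fintype.sum_prod_type, ← hrow]
    _ ≤ ∑ a, (‖B‖ * ‖xa a‖) ^ 2 := by
        gcongr with a
        exact l2_opNorm_mulVec B (xa a)
    _ = (‖B‖ * ‖x‖) ^ 2 := by simp only [mul_pow, hx, Finset.mul_sum]

lemma l2_opNorm_kronecker_one_le [DecidableEq l] [DecidableEq m] [DecidableEq n]
    (A : Matrix m n 𝕜) : ‖A ⊗ₖ (1 : Matrix l l 𝕜)‖ ≤ ‖A‖ := by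
  have hA : A ⊗ₖ (1 : Matrix l l 𝕜) =
      ((1 : Matrix l l 𝕜) ⊗ₖ A).submatrix (Equiv.prodComm m l) (Equiv.prodComm n l) := by
    ext ⟨a, b⟩ ⟨c, d⟩
    simp [mul_comm]
  rw [hA]
  exact (l2_opNorm_submatrix_le _ (Equiv.injective _) (Equiv.injective _)).trans
    (l2_opNorm_one_kronecker_le A)

lemma l2_opNorm_kronecker_le [DecidableEq l] [DecidableEq m] [DecidableEq n] [DecidableEq q]
    (A : Matrix m n 𝕜) (B : Matrix l q 𝕜) : ‖A ⊗ₖ B‖ ≤ ‖A‖ * ‖B‖ := by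
  rw [show A ⊗ₖ B = (A ⊗ₖ (1 : Matrix l l 𝕜)) * ((1 : Matrix n n 𝕜) ⊗ₖ B) by
    rw [← mul_kronecker_mul, Matrix.mul_one, Matrix.one_mul]]
  exact (l2_opNorm_mul _ _).trans (mul_le_mul (l2_opNorm_kronecker_one_le A)
    (l2_opNorm_one_kronecker_le B) (norm_nonneg _) (norm_nonneg _))

lemma l2_opNorm_piKronecker_le {J : Type*} [Fintype J] [DecidableEq J] {κ μ : J → Type*}
    [∀ j, Fintype (κ j)] [∀ j, Fintype (μ j)] [∀ j, DecidableEq (κ j)] [∀ j, DecidableEq (μ j)]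
    (M : ∀ j, Matrix (κ j) (μ j) 𝕜) : ‖piKronecker M‖ ≤ ∏ j, ‖M j‖ := by
  revert ‹Fintype J› ‹DecidableEq J› κ μ
  refine Finite.induction_empty_option (α := J) (P := fun J => ∀ [Fintype J] [DecidableEq J]
    {κ μ : J → Type _} [∀ j, Fintype (κ j)] [∀ j, Fintype (μ j)] [∀ j, DecidableEq (κ j)]
    [∀ j, DecidableEq (μ j)] (M : ∀ j, Matrix (κ j) (μ j) 𝕜), ‖piKronecker M‖ ≤ ∏ j, ‖M j‖)
    ?_ ?_ ?_
  · intro J J' e ih _ _ κ μ _ _ _ _ M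
    let := Fintype.ofEquiv J' e.symm
    classical
    rw [piKronecker_equiv e, ← Fintype.prod_equiv e (fun j => ‖M (e j)‖) _ fun _ => rfl]
    exact (l2_opNorm_submatrix_le _ (Equiv.injective _) (Equiv.injective _)).trans (ih _)
  · intro _ _ κ μ _ _ _ _ M
    rw [Finset.univ_eq_empty, Finset.prod_empty,
      show piKronecker M = (1 : Matrix Unit Unit 𝕜).submatrix (fun _ => ()) (fun _ => ()) by
        ext a b
        simp [piKronecker]]
    exact (l2_opNorm_submatrix_le _ (Function.injective_of_subsingleton _)
      (Function.injective_of_subsingleton _)).trans l2_opNorm_one_le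
  · intro J _ ih hJ _ κ μ _ _ _ _ M
    obtain rfl : hJ = instFintypeOption := Subsingleton.elim _ _
    classical
    rw [piKronecker_option, Fintype.prod_option]
    refine (l2_opNorm_submatrix_le _ (Equiv.injective _) (Equiv.injective _)).trans ?_
    exact (l2_opNorm_kronecker_le _ _).trans
      (mul_le_mul_of_nonneg_left (ih fun j => M (some j)) (norm_nonneg _))

end L2OpNorm

lemma enorm_eq_norm_toLp {ι : Type*} [Fintype ι] (x : ι → ℝ) : enorm x = ‖WithLp.toLp 2 x‖ := by
  simp [enorm, EuclideanSpace.norm_eq]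

lemma spec_eq_l2_opNorm {m n : Type*} [Fintype m] [Fintype n] [DecidableEq n] (A : Matrix m n ℝ) :
    spec A = ‖A‖ := by
  rw [Matrix.l2_opNorm_def, ← ContinuousLinearMap.sSup_unitClosedBall_eq_norm]
  refine congrArg sSup (Set.ext fun t => ?_)
  simp only [Set.mem_image, Set.mem_ofPred_eq, Metric.mem_closedBall, dist_zero_right]
  constructor
  · rintro ⟨x, hx, rfl⟩
    exact ⟨WithLp.toLp 2 x, by rwa [← enorm_eq_norm_toLp], by rw [enorm_eq_norm_toLp]; rfl⟩
  · rintro ⟨x, hx, rfl⟩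
    exact ⟨x.ofLp, by rwa [enorm_eq_norm_toLp], by rw [enorm_eq_norm_toLp]; rfl⟩

lemma l2_opNorm_transpose {m n : Type*} [Fintype m] [Fintype n] [DecidableEq m] [DecidableEq n]
    (A : Matrix m n ℝ) : ‖Aᵀ‖ = ‖A‖ := by
  rw [← conjTranspose_eq_transpose_of_trivial, l2_opNorm_conjTranspose]

lemma eq_zero_of_rank_eq_zero {K m n : Type*} [Field K] [Fintype m] [Fintype n] {A : Matrix m n K}
    (h : A.rank = 0) : A = 0 := by
  classical
  rw [rank, Submodule.finrank_eq_zero, LinearMap.range_eq_bot] at h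
  exact Matrix.toLin'.injective (by rw [Matrix.toLin'_apply', h, map_zero])

lemma sval_one_eq_spec {m n : Type*} [Fintype m] [Fintype n] (A : Matrix m n ℝ) :
    sval 1 A = spec A := by
  have h : {B : Matrix m n ℝ | B.rank < 1} = {0} := by
    ext B
    simpa [Nat.lt_one_iff] using ⟨eq_zero_of_rank_eq_zero, fun hB => hB ▸ rank_zero⟩
  rw [sval, h, Set.image_singleton, csInf_singleton, sub_zero]

section Tucker

variable {ι κ : Fin n → Type*}

lemma unfold_apply (A : ((i : Fin n) → ι i) → ℝ) (k : Fin n) (x : ι k)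
    (y : (j : {j : Fin n // j ≠ k}) → ι j.1) :
    unfold A k x y = A ((Equiv.piSplitAt k ι).symm (x, y)) := by
  refine congrArg A (funext fun i => ?_)
  by_cases h : i = k
  · subst h; simp
  · simp [h]

lemma l2_opNorm_unfold_le_tsmax [∀ i, Fintype (ι i)] [∀ i, DecidableEq (ι i)]
    (A : ((i : Fin n) → ι i) → ℝ) (i : Fin n) :
    ‖unfold A i‖ ≤ tsmax A := by
  rw [← spec_eq_l2_opNorm, ← sval_one_eq_spec]
  exact le_ciSup (f := fun j => sval 1 (unfold A j)) (Set.finite_range _).bddAbove i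

lemma subT_tucker [∀ i, Fintype (κ i)] (T : ((i : Fin n) → κ i) → ℝ)
    (M : (i : Fin n) → Matrix (ι i) (κ i) ℝ) (I : (i : Fin n) → Finset (ι i)) :
    subT (tucker T M) I = tucker T fun i => rowsub (M i) (I i) := rfl

lemma unfold_tucker [∀ i, Fintype (κ i)] (T : ((i : Fin n) → κ i) → ℝ)
    (M : (i : Fin n) → Matrix (ι i) (κ i) ℝ) (i : Fin n) :
    unfold (tucker T M) i = M i * unfold T i * (piKronecker fun j : {j // j ≠ i} => M j)ᵀ := by
  ext x z
  rw [unfold_apply, tucker, ← (Equiv.piSplitAt i κ).symm.sum_comp, Fintype.sum_prod_type]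
  simp only [mul_apply, Finset.sum_mul, transpose_apply, piKronecker, of_apply, unfold_apply]
  rw [Finset.sum_comm]
  refine Finset.sum_congr rfl fun c _ => Finset.sum_congr rfl fun v _ => ?_
  rw [Fintype.prod_eq_mul_prod_subtype_ne _ i,
    Finset.prod_congr rfl fun (j : {j // j ≠ i}) _ => by rw [Equiv.piSplitAt_symm_apply,
      Equiv.piSplitAt_symm_apply, dif_neg j.2, dif_neg j.2]]
  simp only [Equiv.piSplitAt_symm_apply, dite_true]
  ring

lemma l2_opNorm_unfold_tucker_le [∀ i, Fintype (ι i)] [∀ i, Fintype (κ i)]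
    [∀ i, DecidableEq (ι i)] [∀ i, DecidableEq (κ i)] (T : ((i : Fin n) → κ i) → ℝ)
    (M : (i : Fin n) → Matrix (ι i) (κ i) ℝ) (i : Fin n) :
    ‖unfold (tucker T M) i‖ ≤ ‖unfold T i‖ * ∏ j, ‖M j‖ := by
  rw [unfold_tucker, Fintype.prod_eq_mul_prod_subtype_ne _ i]
  calc _ ≤ ‖M i‖ * ‖unfold T i‖ * ‖(piKronecker fun j : {j // j ≠ i} => M j)ᵀ‖ :=
        (l2_opNorm_mul _ _).trans (mul_le_mul_of_nonneg_right (l2_opNorm_mul _ _) (norm_nonneg _))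
    _ ≤ ‖M i‖ * ‖unfold T i‖ * ∏ j : {j // j ≠ i}, ‖M j‖ := by
        rw [l2_opNorm_transpose]
        gcongr
        exact l2_opNorm_piKronecker_le _
    _ = _ := by ring

end Tucker

theorem chidori_core_norm_bound_general {n : ℕ} {d : Fin n → ℕ}
    (A : ((i : Fin n) → Fin (d i)) → ℝ) (r : Fin n → ℕ)
    (W : (i : Fin n) → Matrix (Fin (d i)) (Fin (r i)) ℝ)
    (S : (i : Fin n) → Matrix (Fin (r i)) (Fin (r i)) ℝ)
    (V : (i : Fin n) → Matrix ((j : {j : Fin n // j ≠ i}) → Fin (d j.1)) (Fin (r i)) ℝ)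
    (hSVD : ∀ i, CompactSVD (unfold A i) (W i) (S i) (V i))
    (hHOSVD : A = tucker (tucker A fun i => (W i)ᵀ) W)
    (I : (i : Fin n) → Finset (Fin (d i))) :
    ∀ i, spec (unfold (subT A I) i) ≤
      tsmax A * ∏ j, spec (rowsub (W j) (I j)) := by
  intro i
  have hR : subT A I = tucker (tucker A fun j => (W j)ᵀ) fun j => rowsub (W j) (I j) := by
    rw [← subT_tucker, ← hHOSVD]
  have hW : ∀ j, ‖(W j)ᵀ‖ ≤ 1 := fun j => by
    rw [l2_opNorm_transpose]
    exact l2_opNorm_le_one_of_conjTranspose_mul_self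
      (by rw [conjTranspose_eq_transpose_of_trivial]; exact (hSVD j).2.1)
  have hcore : ‖unfold (tucker A fun j => (W j)ᵀ) i‖ ≤ ‖unfold A i‖ :=
    calc _ ≤ ‖unfold A i‖ * ∏ j, ‖(W j)ᵀ‖ := l2_opNorm_unfold_tucker_le A (fun j => (W j)ᵀ) i
      _ ≤ ‖unfold A i‖ := mul_le_of_le_one_right (norm_nonneg _) <|
          Finset.prod_le_one (fun _ _ => norm_nonneg _) fun j _ => hW j
  simp only [spec_eq_l2_opNorm, hR]
  refine (l2_opNorm_unfold_tucker_le (tucker A fun j => (W j)ᵀ)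
    (fun j => rowsub (W j) (I j)) i).trans ?_
  exact mul_le_mul_of_nonneg_right (hcore.trans (l2_opNorm_unfold_le_tsmax A i))
    (Finset.prod_nonneg fun _ _ => norm_nonneg _)

/-- With HOSVD `A = 𝒯 ×₁ W₁ ⋯ ×ₙ Wₙ` and `ℛ = A(I₁,…,Iₙ)`, one has
`‖ℛ_(i)‖₂ ≤ σ_max(A) · ∏ⱼ ‖Wⱼ(Iⱼ,:)‖₂` for each `i`,
where `σ_max(A) = max_j σ₁(A_(j))`. -/
theorem chidori_core_norm_bound {n : ℕ} {d : Fin n → ℕ}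
    (A : ((i : Fin n) → Fin (d i)) → ℝ) (r : Fin n → ℕ)
    (hrank : ∀ i, (unfold A i).rank = r i)
    (W : (i : Fin n) → Matrix (Fin (d i)) (Fin (r i)) ℝ)
    (S : (i : Fin n) → Matrix (Fin (r i)) (Fin (r i)) ℝ)
    (V : (i : Fin n) → Matrix ((j : {j : Fin n // j ≠ i}) → Fin (d j.1)) (Fin (r i)) ℝ)
    (hSVD : ∀ i, CompactSVD (unfold A i) (W i) (S i) (V i))
    (hHOSVD : A = tucker (tucker A fun i => (W i)ᵀ) W)
    (I : (i : Fin n) → Finset (Fin (d i))) :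
    ∀ i, spec (unfold (subT A I) i) ≤
      tsmax A * ∏ j, spec (rowsub (W j) (I j)) :=
  chidori_core_norm_bound_general A r W S V hSVD hHOSVD I

end TCUR
end
end
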